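/- arXiv:2004.08681 — 5 statements merged into one kernel-verified Lean document; each statement's English description precedes it below -/
import Mathlib

section
/- Let α, β, κ : {0,1}^n → ℝ be coefficient families such that β_b = 0 whenever the Hamming weight |b| is odd, and |β_b| ≤ α_b for all b. Define the 2^n × 2^n matrix H := −Σ_b α_b X_b − Σ_b β_b Y_b + Σ_b κ_b Z_b. Then H is a real symmetric matrix (all entries real, H = Hᵀ) and every off-diagonal entry of H is nonpositive: H_{u,v} ≤ 0 for all u ≠ v. (That is, H is stoquastic in the computational basis.) -/
open Matrix Complex

noncomputable section

/-- Single-qubit Pauli X. -/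
def PX : Matrix (Fin 2) (Fin 2) ℂ := !![0, 1; 1, 0]
/-- Single-qubit Pauli Y. -/
def PY : Matrix (Fin 2) (Fin 2) ℂ := !![0, -Complex.I; Complex.I, 0]
/-- Single-qubit Pauli Z. -/
def PZ : Matrix (Fin 2) (Fin 2) ℂ := !![1, 0; 0, -1]

/-- `P^0 = I`, `P^1 = P`. -/
def pPow (P : Matrix (Fin 2) (Fin 2) ℂ) (e : Fin 2) : Matrix (Fin 2) (Fin 2) ℂ :=
  if e = 0 then 1 else P

/-- The Pauli string `P_b`, a `2^n × 2^n` matrix indexed by bitstrings: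
`(P_b)_{u,v} = ∏_i (P^{b_i})_{u_i, v_i}`. -/
def pauliStr {n : ℕ} (P : Matrix (Fin 2) (Fin 2) ℂ) (b : Fin n → Fin 2) :
    Matrix (Fin n → Fin 2) (Fin n → Fin 2) ℂ :=
  Matrix.of fun u v => ∏ i, pPow P (b i) (u i) (v i)

/-- Hamming weight of a bitstring. -/
def hw {n : ℕ} (b : Fin n → Fin 2) : ℕ := ∑ i, (b i : ℕ)

/-- The Hamiltonian `H = -Σ_b α_b X_b - Σ_b β_b Y_b + Σ_b κ_b Z_b`. -/
def Ham {n : ℕ} (α β κ : (Fin n → Fin 2) → ℝ) :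
    Matrix (Fin n → Fin 2) (Fin n → Fin 2) ℂ :=
  (- ∑ b, (α b : ℂ) • pauliStr PX b) - (∑ b, (β b : ℂ) • pauliStr PY b)
    + ∑ b, (κ b : ℂ) • pauliStr PZ b

/-! `X_b` and `Z_b` are real symmetric and every Pauli string is Hermitian, while `Yᵀ = -Y` gives
`Y_bᵀ = (-1)^|b| Y_b`; so the parity condition on `β` makes `H` symmetric, and a symmetric
Hermitian matrix is real. Off the diagonal, the entry `(u, v)` of a string built from an
off-diagonal Pauli matrix is supported on `b = u ⊕ v`, and `Z_b` is diagonal: hence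
`H_{u,v} = -α_b - β_b (Y_b)_{u,v}` with `b = u ⊕ v` and `|(Y_b)_{u,v}| ≤ 1`, which is `≤ 0`
because `|β_b| ≤ α_b`. -/

variable {n : ℕ}

section SingleQubit

variable {P : Matrix (Fin 2) (Fin 2) ℂ}

lemma pPow_transpose (e : Fin 2) : (pPow P e)ᵀ = pPow Pᵀ e := by
  unfold pPow; split_ifs <;> simp

lemma pPow_conjTranspose (e : Fin 2) :
    (pPow P e)ᴴ = pPow Pᴴ e := by
  unfold pPow; split_ifs <;> simp

lemma pPow_neg (e : Fin 2) :
    pPow (-P) e = (-1 : ℂ) ^ (e : ℕ) • pPow P e := by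
  fin_cases e <;> simp [pPow]

lemma pPow_apply_eq_zero_of_add_ne (hP : ∀ i, P i i = 0) {e x y : Fin 2} (h : x + y ≠ e) :
    pPow P e x y = 0 := by
  fin_cases e <;> fin_cases x <;> fin_cases y <;> simp_all [pPow]

lemma pPow_apply_eq_zero_of_ne (hP : P.IsDiag) (e : Fin 2) {x y : Fin 2} (h : x ≠ y) :
    pPow P e x y = 0 := by
  unfold pPow; split_ifs
  · exact Matrix.one_apply_ne h
  · exact hP h

lemma norm_pPow_apply_le (hP : ∀ i j, ‖P i j‖ ≤ 1) (e x y : Fin 2) : ‖pPow P e x y‖ ≤ 1 := by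
  unfold pPow; split_ifs
  · rw [Matrix.one_apply]; split_ifs <;> simp
  · exact hP x y

lemma PX_conjTranspose : PXᴴ = PX := by
  ext i j; fin_cases i <;> fin_cases j <;> simp [PX]

lemma PY_conjTranspose : PYᴴ = PY := by
  ext i j; fin_cases i <;> fin_cases j <;> simp [PY]

lemma PZ_conjTranspose : PZᴴ = PZ := by
  ext i j; fin_cases i <;> fin_cases j <;> simp [PZ]

lemma PX_transpose : PXᵀ = PX := by
  ext i j; fin_cases i <;> fin_cases j <;> simp [PX]

lemma PY_transpose : PYᵀ = -PY := by
  ext i j; fin_cases i <;> fin_cases j <;> simp [PY]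

lemma PZ_transpose : PZᵀ = PZ := by
  ext i j; fin_cases i <;> fin_cases j <;> simp [PZ]

lemma PX_apply_self (i : Fin 2) : PX i i = 0 := by
  fin_cases i <;> simp [PX]

lemma PY_apply_self (i : Fin 2) : PY i i = 0 := by
  fin_cases i <;> simp [PY]

lemma PZ_isDiag : PZ.IsDiag := by
  intro i j h; fin_cases i <;> fin_cases j <;> simp_all [PZ]

lemma norm_PY_apply_le (i j : Fin 2) : ‖PY i j‖ ≤ 1 := by
  fin_cases i <;> fin_cases j <;> simp [PY]

lemma pPow_PX_apply_add (x y : Fin 2) : pPow PX (x + y) x y = 1 := by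
  fin_cases x <;> fin_cases y <;> simp [pPow, PX]

end SingleQubit

section PauliString

variable {P : Matrix (Fin 2) (Fin 2) ℂ}

lemma pauliStr_transpose (b : Fin n → Fin 2) :
    (pauliStr P b)ᵀ = pauliStr Pᵀ b := by
  ext u v
  simp only [pauliStr, transpose_apply, of_apply, ← pPow_transpose]

lemma pauliStr_conjTranspose (b : Fin n → Fin 2) :
    (pauliStr P b)ᴴ = pauliStr Pᴴ b := by
  ext u v
  simp only [pauliStr, conjTranspose_apply, of_apply, star_prod, ← pPow_conjTranspose]

lemma pauliStr_neg (b : Fin n → Fin 2) :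
    pauliStr (-P) b = (-1 : ℂ) ^ hw b • pauliStr P b := by
  ext u v
  simp only [pauliStr, of_apply, Matrix.smul_apply, pPow_neg, smul_eq_mul,
    Finset.prod_mul_distrib, Finset.prod_pow_eq_pow_sum, hw]

lemma pauliStr_apply_eq_zero_of_add_ne (hP : ∀ i, P i i = 0) {b u v : Fin n → Fin 2}
    (h : u + v ≠ b) : pauliStr P b u v = 0 := by
  obtain ⟨i, hi⟩ := Function.ne_iff.mp h
  exact Finset.prod_eq_zero (Finset.mem_univ i) (pPow_apply_eq_zero_of_add_ne hP hi)

lemma pauliStr_apply_eq_zero_of_ne (hP : P.IsDiag) (b : Fin n → Fin 2) {u v : Fin n → Fin 2}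
    (h : u ≠ v) : pauliStr P b u v = 0 := by
  obtain ⟨i, hi⟩ := Function.ne_iff.mp h
  exact Finset.prod_eq_zero (Finset.mem_univ i) (pPow_apply_eq_zero_of_ne hP _ hi)

lemma norm_pauliStr_apply_le (hP : ∀ i j, ‖P i j‖ ≤ 1) (b u v : Fin n → Fin 2) :
    ‖pauliStr P b u v‖ ≤ 1 := by
  rw [pauliStr, of_apply, norm_prod]
  exact Finset.prod_le_one (fun _ _ ↦ norm_nonneg _) fun i _ ↦ norm_pPow_apply_le hP _ _ _

lemma pauliStr_PX_apply_add (u v : Fin n → Fin 2) : pauliStr PX (u + v) u v = 1 :=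
  Finset.prod_eq_one (s := Finset.univ) fun i _ ↦ pPow_PX_apply_add (u i) (v i)

lemma sum_smul_pauliStr_apply (hP : ∀ i, P i i = 0) (c : (Fin n → Fin 2) → ℂ)
    (u v : Fin n → Fin 2) :
    (∑ b, c b • pauliStr P b) u v = c (u + v) * pauliStr P (u + v) u v := by
  rw [Matrix.sum_apply, Finset.sum_eq_single (u + v)]
  · rfl
  · intro b _ hb
    rw [Matrix.smul_apply, pauliStr_apply_eq_zero_of_add_ne hP (Ne.symm hb), smul_zero]
  · simp

lemma sum_smul_pauliStr_apply_of_ne (hP : P.IsDiag) (c : (Fin n → Fin 2) → ℂ)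
    {u v : Fin n → Fin 2} (h : u ≠ v) : (∑ b, c b • pauliStr P b) u v = 0 := by
  rw [Matrix.sum_apply]
  exact Finset.sum_eq_zero fun b _ ↦ by
    rw [Matrix.smul_apply, pauliStr_apply_eq_zero_of_ne hP b h, smul_zero]

end PauliString

section Hamiltonian

variable (α β κ : (Fin n → Fin 2) → ℝ)

lemma Ham_transpose (hβodd : ∀ b, Odd (hw b) → β b = 0) : (Ham α β κ)ᵀ = Ham α β κ := by
  have hY : ∀ b, (β b : ℂ) • pauliStr (-PY) b = (β b : ℂ) • pauliStr PY b := fun b ↦ by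
    rcases Nat.even_or_odd (hw b) with h | h
    · rw [pauliStr_neg, h.neg_one_pow, one_smul]
    · simp [hβodd b h]
  simp only [Ham, transpose_add, transpose_sub, transpose_neg, transpose_sum, transpose_smul,
    pauliStr_transpose, PX_transpose, PY_transpose, PZ_transpose, hY]

lemma Ham_apply_of_ne {u v : Fin n → Fin 2} (h : u ≠ v) :
    Ham α β κ u v = -α (u + v) - β (u + v) * pauliStr PY (u + v) u v := by
  simp only [Ham, Matrix.add_apply, Matrix.sub_apply, Matrix.neg_apply,
    sum_smul_pauliStr_apply PX_apply_self, sum_smul_pauliStr_apply PY_apply_self,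
    sum_smul_pauliStr_apply_of_ne PZ_isDiag _ h, pauliStr_PX_apply_add, mul_one, add_zero]

lemma Ham_isHermitian : (Ham α β κ).IsHermitian := by
  simp [IsHermitian, Ham, conjTranspose_sum, pauliStr_conjTranspose, PX_conjTranspose,
    PY_conjTranspose, PZ_conjTranspose]

lemma im_Ham_apply (hβodd : ∀ b, Odd (hw b) → β b = 0) (u v : Fin n → Fin 2) :
    (Ham α β κ u v).im = 0 := by
  have hsymm : Ham α β κ v u = Ham α β κ u v := congrFun₂ (Ham_transpose α β κ hβodd) u v
  have h := (Ham_isHermitian α β κ).apply u v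
  rw [hsymm] at h
  exact Complex.conj_eq_iff_im.mp h

lemma re_Ham_apply_nonpos_of_ne (hβα : ∀ b, |β b| ≤ α b) {u v : Fin n → Fin 2} (h : u ≠ v) :
    (Ham α β κ u v).re ≤ 0 := by
  rw [Ham_apply_of_ne α β κ h]
  set y := pauliStr PY (u + v) u v
  have hy : |y.re| ≤ 1 :=
    (Complex.abs_re_le_norm y).trans (norm_pauliStr_apply_le norm_PY_apply_le _ _ _)
  calc (-(α (u + v) : ℂ) - β (u + v) * y).re = -α (u + v) - β (u + v) * y.re := by simp
    _ ≤ -α (u + v) + |β (u + v)| * |y.re| := by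
      rw [← abs_mul]; linarith [neg_abs_le (β (u + v) * y.re)]
    _ ≤ -α (u + v) + |β (u + v)| := by
      gcongr; exact mul_le_of_le_one_right (abs_nonneg _) hy
    _ ≤ 0 := by linarith [hβα (u + v)]

end Hamiltonian

theorem stoquastic_of_coeffs_general (n : ℕ) (α β κ : (Fin n → Fin 2) → ℝ)
    (hβodd : ∀ b, Odd (hw b) → β b = 0)
    (hβα : ∀ b, |β b| ≤ α b) :
    (∀ u v, (Ham α β κ u v).im = 0) ∧
    (Ham α β κ = (Ham α β κ)ᵀ) ∧
    (∀ u v, u ≠ v → (Ham α β κ u v).re ≤ 0) :=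
  ⟨im_Ham_apply α β κ hβodd, (Ham_transpose α β κ hβodd).symm,
    fun _ _ ↦ re_Ham_apply_nonpos_of_ne α β κ hβα⟩

/-- with `β_b = 0` for odd Hamming weight and `|β_b| ≤ α_b`, the Hamiltonian
`H = -Σ α_b X_b - Σ β_b Y_b + Σ κ_b Z_b` is real symmetric with nonpositive
off-diagonal entries (stoquastic in the computational basis). -/
theorem stoquastic_of_coeffs (n : ℕ) (hn : 1 ≤ n) (α β κ : (Fin n → Fin 2) → ℝ)
    (hβodd : ∀ b, Odd (hw b) → β b = 0)
    (hβα : ∀ b, |β b| ≤ α b) :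
    (∀ u v, (Ham α β κ u v).im = 0) ∧
    (Ham α β κ = (Ham α β κ)ᵀ) ∧
    (∀ u v, u ≠ v → (Ham α β κ u v).re ≤ 0) :=
  stoquastic_of_coeffs_general n α β κ hβodd hβα
end
end

section
/- Let H be a real symmetric matrix indexed by a finite nonempty type V such that H_{u,v} ≤ 0 for all u ≠ v. Then there exists a unit eigenvector φ of H for its smallest eigenvalue λ₀(H) such that φ(u) ≥ 0 for all u ∈ V. -/
/-!
Shift `H` by its smallest eigenvalue `μ₀`: `M = H - μ₀ • 1` is positive semidefinite and
kills any ground state `ψ`. Since `M` has nonpositive off-diagonal entries, replacing `ψ` by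
`|ψ|` can only lower the quadratic form `x ⬝ᵥ M *ᵥ x`, which is already `0` at `ψ`; so it
vanishes at `|ψ|`, and for a positive semidefinite matrix this forces `M *ᵥ |ψ| = 0`.
-/

open Matrix
open scoped ComplexOrder Pointwise

namespace Matrix

variable {n : Type*} [Fintype n]

theorem IsHermitian.posSemidef_sub_smul_one {𝕜 : Type*} [RCLike 𝕜] [DecidableEq n]
    {A : Matrix n n 𝕜} (hA : A.IsHermitian) {c : ℝ} (hc : ∀ i, c ≤ hA.eigenvalues i) :
    (A - c • (1 : Matrix n n 𝕜)).PosSemidef := by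
  have hM : (A - c • (1 : Matrix n n 𝕜)).IsHermitian :=
    hA.sub (isHermitian_one.smul (IsSelfAdjoint.all c))
  refine hM.posSemidef_iff_eigenvalues_nonneg.mpr fun j => ?_
  have hspec : spectrum ℝ (A - c • 1) = Set.range hA.eigenvalues - {c} := by
    rw [← Algebra.algebraMap_eq_smul_one, ← spectrum.sub_singleton_eq,
      hA.spectrum_real_eq_range_eigenvalues]
  obtain ⟨_, ⟨i, rfl⟩, _, rfl, hij⟩ := hspec ▸ hM.eigenvalues_mem_spectrum_real j
  simpa [← hij] using hc i

theorem dotProduct_mulVec_abs_le {M : Matrix n n ℝ} (hM : ∀ u v, u ≠ v → M u v ≤ 0)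
    (x : n → ℝ) : |x| ⬝ᵥ M *ᵥ |x| ≤ x ⬝ᵥ M *ᵥ x := by
  simp only [dotProduct, mulVec, Finset.mul_sum, Pi.abs_apply]
  refine Finset.sum_le_sum fun u _ => Finset.sum_le_sum fun v _ => ?_
  rcases eq_or_ne u v with rfl | huv
  · exact le_of_eq (by rw [mul_left_comm, abs_mul_abs_self, mul_left_comm])
  · have hxx : x u * x v ≤ |x u| * |x v| := abs_mul (x u) (x v) ▸ le_abs_self _
    nlinarith [mul_le_mul_of_nonpos_left hxx (hM u v huv)]

theorem PosSemidef.mulVec_abs_eq_zero {M : Matrix n n ℝ} (hM : M.PosSemidef)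
    (hoff : ∀ u v, u ≠ v → M u v ≤ 0) {x : n → ℝ} (hx : M *ᵥ x = 0) : M *ᵥ |x| = 0 := by
  refine (hM.dotProduct_mulVec_zero_iff |x|).mp (le_antisymm ?_ ?_)
  · simpa [hx] using dotProduct_mulVec_abs_le hoff x
  · simpa using hM.dotProduct_mulVec_nonneg |x|

theorem sub_smul_one_mulVec_eq_zero_iff {R : Type*} [CommRing R] [DecidableEq n]
    {A : Matrix n n R} {c : R} {x : n → R} : (A - c • 1) *ᵥ x = 0 ↔ A *ᵥ x = c • x := by
  rw [sub_mulVec, smul_mulVec, one_mulVec, sub_eq_zero]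

end Matrix

/-- a real symmetric matrix with nonpositive off-diagonal entries has a
nonnegative unit eigenvector for its smallest eigenvalue `λ₀(H)`. -/
theorem exists_nonneg_ground_state {V : Type*} [Fintype V] [DecidableEq V] [Nonempty V]
    (H : Matrix V V ℝ) (hH : H.IsHermitian)
    (hoff : ∀ u v : V, u ≠ v → H u v ≤ 0) :
    ∃ φ : V → ℝ, (∑ u, φ u ^ 2 = 1) ∧
      H.mulVec φ = (Finset.univ.inf' Finset.univ_nonempty hH.eigenvalues) • φ ∧
      ∀ u, 0 ≤ φ u := by
  obtain ⟨i, -, hi⟩ := Finset.exists_mem_eq_inf' Finset.univ_nonempty hH.eigenvalues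
  set μ₀ := Finset.univ.inf' Finset.univ_nonempty hH.eigenvalues
  set ψ := hH.eigenvectorBasis i
  have hψ : (H - μ₀ • 1) *ᵥ ψ = 0 :=
    sub_smul_one_mulVec_eq_zero_iff.mpr (hi ▸ hH.mulVec_eigenvectorBasis i)
  have hpsd : (H - μ₀ • 1).PosSemidef :=
    hH.posSemidef_sub_smul_one fun j => Finset.inf'_le _ (Finset.mem_univ j)
  have hMoff : ∀ u v, u ≠ v → (H - μ₀ • 1) u v ≤ 0 := fun u v huv => by
    simpa [one_apply_ne huv] using hoff u v huv
  refine ⟨|⇑ψ|, ?_, ?_, fun u => abs_nonneg (ψ u)⟩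
  · have hnorm : ‖ψ‖ = 1 := hH.eigenvectorBasis.orthonormal.1 i
    simpa [sq_abs, hnorm] using (EuclideanSpace.real_norm_sq_eq ψ).symm
  · exact sub_smul_one_mulVec_eq_zero_iff.mp (hpsd.mulVec_abs_eq_zero hMoff hψ)
end

section
/- Let w : V → V → ℝ be symmetric (w(u,v) = w(v,u)) and G-invariant, let R be a set of orbit representatives, and for r, r' ∈ R define ω(r, r') := Σ_{v ∈ O_{r'}} w(r, v). Then for every finite sequence r₀, r₁, …, r_m of elements of R, |O_{r_m}| · ∏_{i=0}^{m−1} ω(r_{i+1}, r_i) = |O_{r₀}| · ∏_{i=0}^{m−1} ω(r_i, r_{i+1}). In particular, when all the ω-factors along the path are nonzero, |O_{r_m}| = |O_{r₀}| · ∏_{i=0}^{m−1} ω(r_i, r_{i+1}) / ω(r_{i+1}, r_i), so the ratios of class sizes are determined by the effective edge weights along any connecting path. -/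
open MulAction Finset

/-- The orbit of `u` under the action of `G`, as a `Finset` of the finite type `V`. -/
noncomputable def orbitFinset (G : Type*) {V : Type*} [Group G] [MulAction G V] [Fintype V]
    (u : V) : Finset V :=
  (MulAction.orbit G u).toFinite.toFinset

/-- `R` is a set of orbit representatives: it contains exactly one element of each orbit. -/
def IsOrbitReps (G : Type*) {V : Type*} [Group G] [MulAction G V] [Fintype V]
    (R : Finset V) : Prop :=
  ∀ v : V, ∃! r, r ∈ R ∧ r ∈ MulAction.orbit G v

lemma mem_orbitFinset {G V : Type*} [Group G] [MulAction G V] [Fintype V] {u v : V} :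
    v ∈ orbitFinset G u ↔ v ∈ MulAction.orbit G u := Set.Finite.mem_toFinset _

lemma sum_orbit_smul {G V : Type*} [Group G] [MulAction G V] [Fintype V]
    (f : V → ℝ) (g : G) (u : V) :
    ∑ v ∈ orbitFinset G u, f (g • v) = ∑ v ∈ orbitFinset G u, f v := by
  apply Finset.sum_nbij' (fun v => g • v) (fun v => g⁻¹ • v)
  · intro a ha
    rw [mem_orbitFinset] at *
    obtain ⟨h, rfl⟩ := ha
    exact ⟨g * h, mul_smul g h u⟩
  · intro a ha
    rw [mem_orbitFinset] at *
    obtain ⟨h, rfl⟩ := ha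
    exact ⟨g⁻¹ * h, mul_smul g⁻¹ h u⟩
  · intro a _; simp
  · intro a _; simp
  · intro a _; rfl

lemma key_orbit_sum {G V : Type*} [Group G] [MulAction G V] [Fintype V]
    (w : V → V → ℝ)
    (hsymm : ∀ u v : V, w u v = w v u)
    (hinv : ∀ (g : G) (u v : V), w (g • u) (g • v) = w u v)
    (u u' : V) :
    ((orbitFinset G u).card : ℝ) * ∑ v ∈ orbitFinset G u', w u v =
    ((orbitFinset G u').card : ℝ) * ∑ v ∈ orbitFinset G u, w u' v := by
  have double : ∀ a b : V, ∑ x ∈ orbitFinset G a, ∑ v ∈ orbitFinset G b, w x v =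
      ((orbitFinset G a).card : ℝ) * ∑ v ∈ orbitFinset G b, w a v := by
    intro a b
    rw [Finset.sum_congr rfl (fun x hx => ?_), Finset.sum_const, nsmul_eq_mul]
    rw [mem_orbitFinset] at hx
    obtain ⟨g, rfl⟩ := hx
    calc ∑ v ∈ orbitFinset G b, w (g • a) v
        = ∑ v ∈ orbitFinset G b, w (g • a) (g • v) := (sum_orbit_smul _ g b).symm
      _ = ∑ v ∈ orbitFinset G b, w a v := by simp [hinv]
  rw [← double u u', ← double u' u, Finset.sum_comm]
  exact Finset.sum_congr rfl fun x _ => Finset.sum_congr rfl fun v _ => (hsymm x v).symm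

/-- along any path `r₀, …, r_m` of orbit representatives,
`|O_{r_m}| ∏ ω(r_{i+1}, r_i) = |O_{r₀}| ∏ ω(r_i, r_{i+1})` where
`ω(r, r') := Σ_{v ∈ O_{r'}} w(r, v)`; in particular, if all factors are nonzero, then
`|O_{r_m}| = |O_{r₀}| ∏ ω(r_i, r_{i+1}) / ω(r_{i+1}, r_i)`. -/
theorem class_sizes_from_path {V G : Type*} [Fintype V] [Group G] [MulAction G V]
    (w : V → V → ℝ)
    (hsymm : ∀ u v : V, w u v = w v u)
    (hinv : ∀ (g : G) (u v : V), w (g • u) (g • v) = w u v)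
    (R : Finset V) (hR : IsOrbitReps G R)
    (m : ℕ) (r : ℕ → V) (hr : ∀ i ≤ m, r i ∈ R) :
    (((orbitFinset G (r m)).card : ℝ) *
        ∏ i ∈ Finset.range m, ∑ v ∈ orbitFinset G (r i), w (r (i + 1)) v =
      ((orbitFinset G (r 0)).card : ℝ) *
        ∏ i ∈ Finset.range m, ∑ v ∈ orbitFinset G (r (i + 1)), w (r i) v) ∧
    ((∀ i < m, (∑ v ∈ orbitFinset G (r i), w (r (i + 1)) v) ≠ 0) →
      ((orbitFinset G (r m)).card : ℝ) =
        ((orbitFinset G (r 0)).card : ℝ) *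
          ∏ i ∈ Finset.range m,
            (∑ v ∈ orbitFinset G (r (i + 1)), w (r i) v) /
              (∑ v ∈ orbitFinset G (r i), w (r (i + 1)) v)) := by
  have main : ∀ n : ℕ,
      ((orbitFinset G (r n)).card : ℝ) *
        ∏ i ∈ Finset.range n, ∑ v ∈ orbitFinset G (r i), w (r (i + 1)) v =
      ((orbitFinset G (r 0)).card : ℝ) *
        ∏ i ∈ Finset.range n, ∑ v ∈ orbitFinset G (r (i + 1)), w (r i) v := by
    intro n
    induction n with
    | zero => simp
    | succ n ih =>
      rw [Finset.prod_range_succ, Finset.prod_range_succ]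
      have hk := key_orbit_sum w hsymm hinv (r (n + 1)) (r n)
      linear_combination (∏ i ∈ Finset.range n, ∑ v ∈ orbitFinset G (r i), w (r (i + 1)) v) * hk
        + (∑ v ∈ orbitFinset G (r (n + 1)), w (r n) v) * ih
  refine ⟨main m, fun hne => ?_⟩
  have hA : (∏ i ∈ Finset.range m, ∑ v ∈ orbitFinset G (r i), w (r (i + 1)) v) ≠ 0 :=
    Finset.prod_ne_zero_iff.mpr fun i hi => hne i (Finset.mem_range.mp hi)
  rw [Finset.prod_div_distrib]
  field_simp
  linear_combination main m
end

section
/- Let w : V → V → ℝ be symmetric, G-invariant, and nonnegative (w(u,v) ≥ 0), let R be a set of orbit representatives, and for r, r' ∈ R define ω(r, r') := Σ_{v ∈ O_{r'}} w(r, v). Suppose the support graph of w on V is connected: for all u, v ∈ V there is a finite sequence u = x₀, …, x_m = v with w(x_j, x_{j+1}) > 0 for every j < m. Then for all r, r' ∈ R there is a finite sequence r = r₀, r₁, …, r_m = r' of elements of R with ω(r_i, r_{i+1}) > 0 for every i < m; that is, the effective graph on representatives is connected. -/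
open MulAction Finset

/-- if the support graph of the symmetric, `G`-invariant, nonnegative weight
`w` is connected on `V`, then the effective graph on a set of orbit representatives `R`
(with weights `ω(r, r') := Σ_{v ∈ O_{r'}} w(r, v)`) is connected. -/
theorem effective_graph_connected {V G : Type*} [Fintype V] [Group G] [MulAction G V]
    (w : V → V → ℝ)
    (hsymm : ∀ u v : V, w u v = w v u)
    (hinv : ∀ (g : G) (u v : V), w (g • u) (g • v) = w u v)
    (hnonneg : ∀ u v : V, 0 ≤ w u v)
    (R : Finset V) (hR : IsOrbitReps G R)
    (hconn : ∀ u v : V, ∃ (m : ℕ) (x : ℕ → V), x 0 = u ∧ x m = v ∧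
      ∀ j < m, 0 < w (x j) (x (j + 1))) :
    ∀ r ∈ R, ∀ r' ∈ R, ∃ (m : ℕ) (c : ℕ → V), c 0 = r ∧ c m = r' ∧
      (∀ i ≤ m, c i ∈ R) ∧
      ∀ i < m, 0 < ∑ v ∈ orbitFinset G (c (i + 1)), w (c i) v := by
  classical
  -- representative function
  let rep : V → V := fun v => (hR v).choose
  have hrepR : ∀ v, rep v ∈ R := fun v => (hR v).choose_spec.1.1
  have hrepO : ∀ v, rep v ∈ MulAction.orbit G v := fun v => (hR v).choose_spec.1.2
  have hrep_fix : ∀ r ∈ R, rep r = r := by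
    intro r hr
    exact ((hR r).choose_spec.2 r ⟨hr, MulAction.mem_orbit_self r⟩).symm
  intro r hr r' hr'
  obtain ⟨m, x, hx0, hxm, hxpos⟩ := hconn r r'
  refine ⟨m, fun i => rep (x i), by show rep (x 0) = r; rw [hx0]; exact hrep_fix r hr,
    by show rep (x m) = r'; rw [hxm]; exact hrep_fix r' hr', fun i _ => hrepR _, ?_⟩
  intro i hi
  -- rep (x i) = g • x i for some g
  obtain ⟨g, hg⟩ := hrepO (x i)
  have hg' : g • x i = rep (x i) := hg
  have hmem : g • x (i + 1) ∈ orbitFinset G (rep (x (i + 1))) := by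
    rw [orbitFinset, Set.Finite.mem_toFinset]
    have : MulAction.orbit G (rep (x (i + 1))) = MulAction.orbit G (x (i + 1)) :=
      MulAction.orbit_eq_iff.mpr (hrepO (x (i + 1)))
    rw [this]
    exact ⟨g, rfl⟩
  apply Finset.sum_pos' (fun v _ => hnonneg _ _)
  refine ⟨g • x (i + 1), hmem, ?_⟩
  show 0 < w (rep (x i)) (g • x (i + 1))
  rw [← hg', hinv]
  exact hxpos i hi
end

section
/- (Non-asymptotic form of Theorem S.1.) Let H be a real symmetric matrix indexed by a finite type V with at least two elements, such that H_{u,v} ≤ 0 for all u ≠ v and |H_{u,v}| ≤ 1 for all u,v, and suppose each v ∈ V has at most D indices u ≠ v with H_{u,v} ≠ 0. Let φ : V → ℝ be a nonnegative unit eigenvector of H for its smallest eigenvalue λ₀(H). Let ε > 0 and S₀ := { u ∈ V : φ(u) < ε }; suppose the complement of S₀ has at most m elements, and Σ_{u ∈ S₀} φ(u)² ≥ μ and Σ_{u ∉ S₀} φ(u)² ≥ μ for some μ > 0. Then the spectral gap of H satisfies λ₁(H) − λ₀(H) ≤ 2·ε·D·m / μ, where λ₁(H) is the second-smallest eigenvalue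 of H counted with multiplicity. -/
open Matrix Finset

/-- The eigenvalues of a real symmetric matrix, counted with multiplicity and sorted in
increasing order; its first two entries are `λ₀(H)` and `λ₁(H)`. -/
noncomputable def sortedEigs {V : Type*} [Fintype V] [DecidableEq V] {H : Matrix V V ℝ}
    (hH : H.IsHermitian) : List ℝ :=
  Multiset.sort (Finset.univ.val.map hH.eigenvalues) (· ≤ ·)

/-!
Test the Rayleigh quotient on `g = c * φ`, where `c` equals `α = ∑_{S₀ᶜ} φ²` on `S₀` and
`-β = -∑_{S₀} φ²` off it, so that `g ⟂ φ` and `‖g‖² = αβ ≥ μ / 2`. As `φ` is a ground state,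
`g ⟂ φ` gives `λ₁ ‖g‖² ≤ ⟪g, H g⟫` (expand in an eigenbasis: at most one eigenvalue lies below
`λ₁`, and its eigenvector is then parallel to `φ`). The ground-state transform rewrites
`⟪g, H g⟫ - λ₀ ‖g‖²` as `½ ∑_{u,v} (-H u v) φ u φ v (c u - c v)²`. Only the ordered pairs
crossing the cut `S₀` contribute, each at most `ε` (one endpoint has `φ < ε`, the other
`φ ≤ 1`), and there are at most `2 D m` of them, each having an endpoint outside `S₀`.
-/

namespace List

variable {α : Type*} [LinearOrder α] {L : List α}

theorem Pairwise.getD_zero_le_of_mem (hL : L.Pairwise (· ≤ ·)) (d : α) {x : α} (hx : x ∈ L) :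
    L.getD 0 d ≤ x := by
  cases L with
  | nil => simp at hx
  | cons a t =>
    rcases mem_cons.mp hx with rfl | hx
    · exact le_rfl
    · exact rel_of_pairwise_cons hL hx

theorem Pairwise.countP_lt_getD_one_le (hL : L.Pairwise (· ≤ ·)) (d : α) :
    L.countP (· < L.getD 1 d) ≤ 1 := by
  match L, hL with
  | [], _ => simp
  | [_], _ => exact countP_le_length
  | _ :: b :: t, hL =>
    have hbt : (b :: t).countP (· < b) = 0 :=
      countP_eq_zero.mpr fun x hx => by
        simpa using (pairwise_cons.mp hL).2.getD_zero_le_of_mem d hx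
    rw [countP_cons, getD_cons_succ, getD_cons_zero, hbt]
    split <;> simp

end List

theorem le_sum_mul_sq_of_orthogonal {ι K : Type*} [Fintype ι] [CommRing K] [LinearOrder K]
    [IsStrictOrderedRing K] {lam c d : ι → K} {l₀ l₁ : K}
    (hl₀ : ∀ i, l₀ ≤ lam i) (hl₁ : #{i | lam i < l₁} ≤ 1) (hd : d ≠ 0)
    (hdeig : ∀ i, (lam i - l₀) * d i = 0) (horth : ∑ i, d i * c i = 0) :
    l₁ * ∑ i, c i ^ 2 ≤ ∑ i, lam i * c i ^ 2 := by
  rw [mul_sum]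
  refine sum_le_sum fun i _ => ?_
  by_cases hi : l₁ ≤ lam i
  · exact mul_le_mul_of_nonneg_right hi (sq_nonneg _)
  suffices c i = 0 by simp [this]
  -- `i` is the only index below `l₁`, so `d` is supported on `{i}`
  have hd_other : ∀ j ≠ i, d j = 0 := fun j hj => by
    have hlj : l₁ ≤ lam j := by
      by_contra hlj
      exact hj (card_le_one.mp hl₁ j (by simpa using hlj) i (by simpa using hi))
    have : lam j - l₀ ≠ 0 := (by linarith [hl₀ i, not_le.mp hi] : 0 < lam j - l₀).ne'
    exact (mul_eq_zero.mp (hdeig j)).resolve_left this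
  have hdi : d i ≠ 0 := fun hdi => hd <| funext fun j => by
    by_cases hj : j = i
    · rwa [hj]
    · exact hd_other j hj
  rw [sum_eq_single i (fun j _ hj => by rw [hd_other j hj, zero_mul]) (by simp)] at horth
  exact (mul_eq_zero.mp horth).resolve_left hdi

theorem Matrix.IsSymm.two_mul_dotProduct_mulVec_mul_sub_eq_sum {V R : Type*} [Fintype V]
    [CommRing R] {H : Matrix V V R} (hH : H.IsSymm) {φ : V → R} {l : R} (heig : H *ᵥ φ = l • φ)
    (c : V → R) :
    2 * ((c * φ) ⬝ᵥ (H *ᵥ (c * φ)) - l * ((c * φ) ⬝ᵥ (c * φ))) =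
      ∑ u, ∑ v, -H u v * (φ u * φ v) * (c u - c v) ^ 2 := by
  have hrow (u : V) : ∑ v, H u v * φ v = l * φ u := congrFun heig u
  have hdiag : ∑ u, ∑ v, H u v * (φ u * φ v) * c u ^ 2 = l * ((c * φ) ⬝ᵥ (c * φ)) := by
    rw [dotProduct, mul_sum]
    refine sum_congr rfl fun u _ => ?_
    calc ∑ v, H u v * (φ u * φ v) * c u ^ 2 = φ u * c u ^ 2 * ∑ v, H u v * φ v := by
          rw [mul_sum]; exact sum_congr rfl fun v _ => by ring
      _ = l * ((c * φ) u * (c * φ) u) := by rw [hrow]; simp only [Pi.mul_apply]; ring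
  have hdiag' : ∑ u, ∑ v, H u v * (φ u * φ v) * c v ^ 2 = l * ((c * φ) ⬝ᵥ (c * φ)) := by
    rw [sum_comm, ← hdiag]
    exact sum_congr rfl fun v _ => sum_congr rfl fun u _ => by rw [hH.apply v u]; ring
  have hcross : ∑ u, ∑ v, H u v * (φ u * φ v) * (c u * c v) = (c * φ) ⬝ᵥ (H *ᵥ (c * φ)) := by
    simp only [dotProduct, mulVec, Pi.mul_apply, mul_sum]
    exact sum_congr rfl fun u _ => sum_congr rfl fun v _ => by ring
  calc 2 * ((c * φ) ⬝ᵥ (H *ᵥ (c * φ)) - l * ((c * φ) ⬝ᵥ (c * φ)))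
      = 2 * ∑ u, ∑ v, H u v * (φ u * φ v) * (c u * c v)
        - ∑ u, ∑ v, H u v * (φ u * φ v) * c u ^ 2
        - ∑ u, ∑ v, H u v * (φ u * φ v) * c v ^ 2 := by rw [hcross, hdiag, hdiag']; ring
    _ = ∑ u, ∑ v, -H u v * (φ u * φ v) * (c u - c v) ^ 2 := by
      simp only [mul_sum, ← sum_sub_distrib]
      exact sum_congr rfl fun u _ => sum_congr rfl fun v _ => by ring

theorem card_filter_snd_mem_le {α β : Type*} [Fintype α] [DecidableEq α] [Fintype β]
    [DecidableEq β] (N : β → Finset α) {D : ℕ} (hN : ∀ b, #(N b) ≤ D) (T : Finset β) :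
    #{p : α × β | p.2 ∈ T ∧ p.1 ∈ N p.2} ≤ #T * D := by
  have hunion : ({p : α × β | p.2 ∈ T ∧ p.1 ∈ N p.2} : Finset (α × β)) =
      T.biUnion fun b => N b ×ˢ {b} := by
    ext ⟨a, b⟩
    simp [and_comm]
  calc #{p : α × β | p.2 ∈ T ∧ p.1 ∈ N p.2} ≤ ∑ b ∈ T, #(N b ×ˢ {b}) := by
        rw [hunion]; exact card_biUnion_le
    _ ≤ #T * D := sum_le_card_nsmul _ _ _ fun b _ => by simpa using hN b

theorem Matrix.IsHermitian.isSymm {n α : Type*} [Star α] [TrivialStar α] {A : Matrix n n α}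
    (hA : A.IsHermitian) : A.IsSymm :=
  (conjTranspose_eq_transpose_of_trivial A).symm.trans hA

section

variable {V : Type*} [Fintype V] [DecidableEq V]

theorem sum_ite_mem_mul {R : Type*} [NonUnitalNonAssocSemiring R] (S : Finset V) (a b : R)
    (f : V → R) : ∑ u, (if u ∈ S then a else b) * f u = a * ∑ u ∈ S, f u + b * ∑ u ∈ Sᶜ, f u := by
  simp [ite_mul, sum_ite, mul_sum, ← compl_filter]

theorem dotProduct_ite_mul (φ : V → ℝ) (S : Finset V) (a b : ℝ) :
    φ ⬝ᵥ ((fun u => if u ∈ S then a else b) * φ) =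
      a * ∑ u ∈ S, φ u ^ 2 + b * ∑ u ∈ Sᶜ, φ u ^ 2 := by
  rw [← sum_ite_mem_mul]
  exact sum_congr rfl fun u _ => by simp only [Pi.mul_apply]; ring

theorem ite_mul_dotProduct_self (φ : V → ℝ) (S : Finset V) (a b : ℝ) :
    ((fun u => if u ∈ S then a else b) * φ) ⬝ᵥ ((fun u => if u ∈ S then a else b) * φ) =
      a ^ 2 * ∑ u ∈ S, φ u ^ 2 + b ^ 2 * ∑ u ∈ Sᶜ, φ u ^ 2 := by
  rw [← sum_ite_mem_mul]
  exact sum_congr rfl fun u _ => by simp only [Pi.mul_apply]; split_ifs <;> ring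

namespace Matrix

namespace IsHermitian

variable {H : Matrix V V ℝ} (hH : H.IsHermitian)

theorem sortedEigs_pairwise : (sortedEigs hH).Pairwise (· ≤ ·) := Multiset.pairwise_sort _ _

theorem sortedEigs_getD_zero_le (i : V) : (sortedEigs hH).getD 0 0 ≤ hH.eigenvalues i :=
  hH.sortedEigs_pairwise.getD_zero_le_of_mem 0 <| by
    rw [← Multiset.mem_coe, sortedEigs, Multiset.sort_eq]
    exact Multiset.mem_map_of_mem _ (mem_univ_val i)

theorem card_eigenvalues_lt_sortedEigs_getD_one_le :
    #{i | hH.eigenvalues i < (sortedEigs hH).getD 1 0} ≤ 1 := by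
  have := hH.sortedEigs_pairwise.countP_lt_getD_one_le 0
  rwa [← Multiset.coe_countP, sortedEigs, Multiset.sort_eq, Multiset.countP_map] at this

theorem sum_eigenvectorBasis_dotProduct_mul (x y : V → ℝ) :
    ∑ i, (hH.eigenvectorBasis i ⬝ᵥ x) * (hH.eigenvectorBasis i ⬝ᵥ y) = x ⬝ᵥ y := by
  simpa [EuclideanSpace.inner_eq_star_dotProduct, dotProduct_comm] using
    hH.eigenvectorBasis.sum_inner_mul_inner (WithLp.toLp 2 x) (WithLp.toLp 2 y)

theorem eigenvectorBasis_dotProduct_mulVec (i : V) (x : V → ℝ) :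
    hH.eigenvectorBasis i ⬝ᵥ (H *ᵥ x) = hH.eigenvalues i * (hH.eigenvectorBasis i ⬝ᵥ x) := by
  rw [dotProduct_mulVec, ← mulVec_transpose, hH.isSymm.eq,
    mulVec_eigenvectorBasis, smul_dotProduct, smul_eq_mul]

theorem eigenvectorBasis_dotProduct_ne_zero {x : V → ℝ} (hx : x ≠ 0) :
    (fun i => hH.eigenvectorBasis i ⬝ᵥ x) ≠ 0 := fun h => hx <| by
  rw [← dotProduct_self_eq_zero, ← hH.sum_eigenvectorBasis_dotProduct_mul]
  simp [fun i => congrFun h i]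

theorem sortedEigs_getD_one_mul_le {φ g : V → ℝ} (hφ : φ ≠ 0)
    (heig : H *ᵥ φ = (sortedEigs hH).getD 0 0 • φ) (horth : φ ⬝ᵥ g = 0) :
    (sortedEigs hH).getD 1 0 * (g ⬝ᵥ g) ≤ g ⬝ᵥ (H *ᵥ g) := by
  have hquad : g ⬝ᵥ (H *ᵥ g) = ∑ i, hH.eigenvalues i * (hH.eigenvectorBasis i ⬝ᵥ g) ^ 2 := by
    simp only [← hH.sum_eigenvectorBasis_dotProduct_mul g, hH.eigenvectorBasis_dotProduct_mulVec]
    exact sum_congr rfl fun i _ => by ring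
  have hnorm : g ⬝ᵥ g = ∑ i, (hH.eigenvectorBasis i ⬝ᵥ g) ^ 2 := by
    simp only [← hH.sum_eigenvectorBasis_dotProduct_mul g, sq]
  rw [hquad, hnorm]
  refine le_sum_mul_sq_of_orthogonal hH.sortedEigs_getD_zero_le
    hH.card_eigenvalues_lt_sortedEigs_getD_one_le (hH.eigenvectorBasis_dotProduct_ne_zero hφ)
    (fun i => ?_) (by rwa [hH.sum_eigenvectorBasis_dotProduct_mul])
  have := hH.eigenvectorBasis_dotProduct_mulVec i φ
  rw [heig, dotProduct_smul, smul_eq_mul] at this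
  rw [sub_mul, ← this, sub_self]

end IsHermitian

def cutPairs {R : Type*} [Zero R] [DecidableEq R] (H : Matrix V V R) (S : Finset V) :
    Finset (V × V) :=
  {p | p.1 ≠ p.2 ∧ H p.1 p.2 ≠ 0 ∧ (p.1 ∈ S ↔ p.2 ∉ S)}

@[simp]
theorem mem_cutPairs {R : Type*} [Zero R] [DecidableEq R] {H : Matrix V V R} {S : Finset V}
    {p : V × V} : p ∈ cutPairs H S ↔ p.1 ≠ p.2 ∧ H p.1 p.2 ≠ 0 ∧ (p.1 ∈ S ↔ p.2 ∉ S) := by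
  simp [cutPairs]

theorem card_cutPairs_le {R : Type*} [Zero R] [DecidableEq R] {H : Matrix V V R} (hH : H.IsSymm)
    {D : ℕ} (hdeg : ∀ v, #{u | u ≠ v ∧ H u v ≠ 0} ≤ D) (S : Finset V) :
    #(cutPairs H S) ≤ 2 * (#Sᶜ * D) := by
  have hswap : #{p ∈ cutPairs H S | p.1 ∉ S} = #{p ∈ cutPairs H S | p.2 ∉ S} := by
    refine card_nbij' Prod.swap Prod.swap ?_ ?_ (fun _ _ => rfl) (fun _ _ => rfl) <;>
    · rintro ⟨u, v⟩
      simp only [coe_filter, mem_cutPairs, Set.mem_ofPred_eq, Prod.swap_prod_mk, hH.apply u v]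
      tauto
  calc #(cutPairs H S)
      ≤ #{p ∈ cutPairs H S | p.1 ∉ S} + #{p ∈ cutPairs H S | p.2 ∉ S} := by
        refine (card_le_card fun p hp => ?_).trans (card_union_le _ _)
        simp only [mem_cutPairs, mem_filter, mem_union] at hp ⊢
        tauto
    _ = 2 * #{p ∈ cutPairs H S | p.2 ∉ S} := by rw [hswap, two_mul]
    _ ≤ 2 * #{p : V × V | p.2 ∈ Sᶜ ∧ p.1 ∈ ({u | u ≠ p.2 ∧ H u p.2 ≠ 0} : Finset V)} := by
        gcongr
        intro p
        simp only [mem_cutPairs, mem_filter, mem_univ, true_and, mem_compl]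
        tauto
    _ ≤ 2 * (#Sᶜ * D) := by
        gcongr
        exact card_filter_snd_mem_le _ hdeg _

theorem neg_mul_mul_sq_sub_ite_le {H : Matrix V V ℝ} (hoff : ∀ u v, u ≠ v → H u v ≤ 0)
    (hbd : ∀ u v, |H u v| ≤ 1) {φ : V → ℝ} (hφ0 : ∀ u, 0 ≤ φ u) (hφ1 : ∀ u, φ u ≤ 1)
    {ε : ℝ} {S : Finset V} (hS : ∀ u ∈ S, φ u < ε) (a b : ℝ) (u v : V) :
    -H u v * (φ u * φ v) * ((if u ∈ S then a else b) - (if v ∈ S then a else b)) ^ 2 ≤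
      if (u, v) ∈ cutPairs H S then ε * (a - b) ^ 2 else 0 := by
  by_cases huv : (u, v) ∈ cutPairs H S
  · rw [if_pos huv]
    obtain ⟨hne, -, hcut⟩ := mem_cutPairs.1 huv
    have hH0 : 0 ≤ -H u v := neg_nonneg.2 (hoff u v hne)
    have hH1 : -H u v ≤ 1 := neg_le.1 (abs_le.1 (hbd u v)).1
    have hφε : φ u * φ v ≤ ε := by
      by_cases hu : u ∈ S
      · calc φ u * φ v ≤ φ u * 1 := mul_le_mul_of_nonneg_left (hφ1 v) (hφ0 u)
          _ ≤ ε := by linarith [hS u hu]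
      · calc φ u * φ v ≤ 1 * φ v := mul_le_mul_of_nonneg_right (hφ1 u) (hφ0 v)
          _ ≤ ε := by linarith [hS v (not_not.1 (mt hcut.2 hu))]
    have hc : ((if u ∈ S then a else b) - (if v ∈ S then a else b)) ^ 2 = (a - b) ^ 2 := by
      by_cases hu : u ∈ S
      · simp [hu, hcut.1 hu]
      · simp [hu, not_not.1 (mt hcut.2 hu)]; ring
    rw [hc]
    calc -H u v * (φ u * φ v) * (a - b) ^ 2 ≤ 1 * ε * (a - b) ^ 2 := by
          gcongr
          exact mul_nonneg (hφ0 u) (hφ0 v)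
      _ = ε * (a - b) ^ 2 := by ring
  · rw [if_neg huv]
    simp only [mem_cutPairs, not_and_or, not_not] at huv
    rcases huv with rfl | h | h
    · simp
    · simp [h]
    · have hv : v ∈ S ↔ u ∈ S := by tauto
      by_cases hu : u ∈ S <;> simp [hu, hv]

theorem sum_neg_mul_sq_sub_ite_le {H : Matrix V V ℝ} (hoff : ∀ u v, u ≠ v → H u v ≤ 0)
    (hbd : ∀ u v, |H u v| ≤ 1) {φ : V → ℝ} (hφ0 : ∀ u, 0 ≤ φ u) (hφ1 : ∀ u, φ u ≤ 1)
    {ε : ℝ} {S : Finset V} (hS : ∀ u ∈ S, φ u < ε) (a b : ℝ) :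
    ∑ u, ∑ v, -H u v * (φ u * φ v) *
        ((if u ∈ S then a else b) - (if v ∈ S then a else b)) ^ 2 ≤
      ε * (a - b) ^ 2 * #(cutPairs H S) := by
  calc _ = ∑ p : V × V, -H p.1 p.2 * (φ p.1 * φ p.2) *
          ((if p.1 ∈ S then a else b) - (if p.2 ∈ S then a else b)) ^ 2 :=
        (Fintype.sum_prod_type' _).symm
    _ ≤ ∑ p : V × V, if p ∈ cutPairs H S then ε * (a - b) ^ 2 else 0 :=
        sum_le_sum fun p _ => neg_mul_mul_sq_sub_ite_le hoff hbd hφ0 hφ1 hS a b p.1 p.2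
    _ = ε * (a - b) ^ 2 * #(cutPairs H S) := by
        rw [sum_ite_mem, univ_inter, sum_const, nsmul_eq_mul, mul_comm]

theorem IsHermitian.sortedEigs_gap_mul_le {H : Matrix V V ℝ} (hH : H.IsHermitian)
    (hoff : ∀ u v, u ≠ v → H u v ≤ 0) (hbd : ∀ u v, |H u v| ≤ 1) {φ : V → ℝ}
    (hφ0 : ∀ u, 0 ≤ φ u) (hφ : φ ⬝ᵥ φ = 1) (heig : H *ᵥ φ = (sortedEigs hH).getD 0 0 • φ)
    {ε : ℝ} {S : Finset V} (hS : ∀ u ∈ S, φ u < ε) :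
    ((sortedEigs hH).getD 1 0 - (sortedEigs hH).getD 0 0) *
        ((∑ u ∈ S, φ u ^ 2) * ∑ u ∈ Sᶜ, φ u ^ 2) ≤
      ε / 2 * #(cutPairs H S) := by
  have hβα : ∑ u ∈ S, φ u ^ 2 + ∑ u ∈ Sᶜ, φ u ^ 2 = 1 := by
    rw [sum_add_sum_compl, ← hφ]
    exact sum_congr rfl fun u _ => sq (φ u)
  generalize hβ : ∑ u ∈ S, φ u ^ 2 = β at hβα ⊢
  generalize hα : ∑ u ∈ Sᶜ, φ u ^ 2 = α at hβα ⊢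
  have hφ1 (u : V) : φ u ≤ 1 := by
    have : φ u * φ u ≤ 1 := hφ ▸ single_le_sum (fun v _ => mul_self_nonneg (φ v)) (mem_univ u)
    nlinarith [hφ0 u]
  have horth : φ ⬝ᵥ ((fun u => if u ∈ S then α else -β) * φ) = 0 := by
    rw [dotProduct_ite_mul, hβ, hα]; ring
  have hray := hH.sortedEigs_getD_one_mul_le (by rintro rfl; simp at hφ) heig horth
  have hgst := hH.isSymm.two_mul_dotProduct_mulVec_mul_sub_eq_sum heig
    (fun u => if u ∈ S then α else -β)
  have hdir := sum_neg_mul_sq_sub_ite_le hoff hbd hφ0 hφ1 hS α (-β)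
  have hnorm : α ^ 2 * β + (-β) ^ 2 * α = β * α := by linear_combination β * α * hβα
  rw [ite_mul_dotProduct_self, hβ, hα, hnorm] at hray hgst
  rw [sub_neg_eq_add, add_comm, hβα, one_pow, mul_one] at hdir
  linarith

end Matrix

end

theorem gap_bound_of_small_cheeger_general {V : Type*} [Fintype V] [DecidableEq V]
    (H : Matrix V V ℝ) (hH : H.IsHermitian)
    (hoff : ∀ u v : V, u ≠ v → H u v ≤ 0)
    (hbd : ∀ u v : V, |H u v| ≤ 1)
    (D : ℕ) (hdeg : ∀ v : V, (univ.filter fun u => u ≠ v ∧ H u v ≠ 0).card ≤ D)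
    (φ : V → ℝ) (hpos : ∀ u, 0 ≤ φ u) (hnorm : ∑ u, φ u ^ 2 = 1)
    (heig : H.mulVec φ = ((sortedEigs hH).getD 0 0) • φ)
    (ε : ℝ) (hε : 0 < ε)
    (m : ℕ) (hm : (univ.filter fun u => ¬ φ u < ε).card ≤ m)
    (μ : ℝ) (hμ : 0 < μ)
    (hS : μ ≤ ∑ u ∈ univ.filter fun u => φ u < ε, φ u ^ 2)
    (hSc : μ ≤ ∑ u ∈ univ.filter fun u => ¬ φ u < ε, φ u ^ 2) :
    (sortedEigs hH).getD 1 0 - (sortedEigs hH).getD 0 0 ≤ 2 * ε * D * m / μ := by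
  set S : Finset V := {u | φ u < ε}
  rw [← compl_filter] at hm hSc
  have hmass : ∑ u ∈ S, φ u ^ 2 + ∑ u ∈ Sᶜ, φ u ^ 2 = 1 := by rwa [sum_add_sum_compl]
  have hgap := hH.sortedEigs_gap_mul_le hoff hbd hpos (by simpa [dotProduct, sq] using hnorm)
    heig (ε := ε) (S := S) (by simp [S])
  have hcut : (#(cutPairs H S) : ℝ) ≤ 2 * (m * D) := by
    exact_mod_cast (card_cutPairs_le hH.isSymm hdeg S).trans (by gcongr)
  have hprod : μ / 2 ≤ (∑ u ∈ S, φ u ^ 2) * ∑ u ∈ Sᶜ, φ u ^ 2 := by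
    nlinarith [mul_le_mul hS hSc hμ.le (hμ.le.trans hS)]
  calc (sortedEigs hH).getD 1 0 - (sortedEigs hH).getD 0 0
      ≤ ε / 2 * #(cutPairs H S) / ((∑ u ∈ S, φ u ^ 2) * ∑ u ∈ Sᶜ, φ u ^ 2) :=
        (le_div_iff₀ (by linarith)).2 hgap
    _ ≤ ε / 2 * (2 * (m * D)) / (μ / 2) := by gcongr
    _ = 2 * ε * D * m / μ := by ring

/-- non-asymptotic Theorem S.1: if a real symmetric stoquastic matrix `H`
(entries bounded by `1`, at most `D` nonzero off-diagonal entries per column) has a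
nonnegative unit ground state `φ` such that `S₀ = {u : φ(u) < ε}` has complement of size at
most `m` and both `S₀` and its complement carry probability at least `μ`, then the spectral
gap satisfies `λ₁(H) − λ₀(H) ≤ 2·ε·D·m/μ`. -/
theorem gap_bound_of_small_cheeger {V : Type*} [Fintype V] [DecidableEq V]
    (hcard : 2 ≤ Fintype.card V)
    (H : Matrix V V ℝ) (hH : H.IsHermitian)
    (hoff : ∀ u v : V, u ≠ v → H u v ≤ 0)
    (hbd : ∀ u v : V, |H u v| ≤ 1)
    (D : ℕ) (hdeg : ∀ v : V, (univ.filter fun u => u ≠ v ∧ H u v ≠ 0).card ≤ D)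
    (φ : V → ℝ) (hpos : ∀ u, 0 ≤ φ u) (hnorm : ∑ u, φ u ^ 2 = 1)
    (heig : H.mulVec φ = ((sortedEigs hH).getD 0 0) • φ)
    (ε : ℝ) (hε : 0 < ε)
    (m : ℕ) (hm : (univ.filter fun u => ¬ φ u < ε).card ≤ m)
    (μ : ℝ) (hμ : 0 < μ)
    (hS : μ ≤ ∑ u ∈ univ.filter fun u => φ u < ε, φ u ^ 2)
    (hSc : μ ≤ ∑ u ∈ univ.filter fun u => ¬ φ u < ε, φ u ^ 2) :
    (sortedEigs hH).getD 1 0 - (sortedEigs hH).getD 0 0 ≤ 2 * ε * D * m / μ :=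
  gap_bound_of_small_cheeger_general H hH hoff hbd D hdeg φ hpos hnorm heig ε hε m hm μ hμ hS hSc
end
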